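/- arXiv:2510.16595 — 9 statements merged into one kernel-verified Lean document; each statement's English description precedes it below -/
import Mathlib

section
/- For every integer n ≥ 2 and real κ ≥ 1, the inequality 1/n ≤ (2/3)·(1/n)^(1/κ) + (1/3)·(1/n)^κ holds. -/
/-!
Write `x = 1/n ∈ (0, 1/2]`. For `κ ≤ 2` the weighted AM–GM inequality bounds the right-hand side
below by `x ^ (2/(3κ) + κ/3)`, and this exponent is at most `1` exactly when `(κ - 1)(κ - 2) ≤ 0`.
For `κ ≥ 3` the first term alone suffices, since `x ^ (2/3) ≤ 2/3`. In between, the right-hand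
side is at least `(2/3)√x + (1/3)x³`, and with `s = √x ≤ 1/√2` this becomes the polynomial
inequality `3s ≤ 2 + s⁵`.
-/

open Real

theorem self_le_weighted_rpow_add_rpow {x a b w₁ w₂ : ℝ} (hx0 : 0 < x) (hx1 : x ≤ 1)
    (hw₁ : 0 ≤ w₁) (hw₂ : 0 ≤ w₂) (hw : w₁ + w₂ = 1) (hab : w₁ * a + w₂ * b ≤ 1) :
    x ≤ w₁ * x ^ a + w₂ * x ^ b :=
  calc x = x ^ (1 : ℝ) := (rpow_one x).symm
    _ ≤ x ^ (w₁ * a + w₂ * b) := rpow_le_rpow_of_exponent_ge hx0 hx1 hab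
    _ = (x ^ a) ^ w₁ * (x ^ b) ^ w₂ := by
      rw [rpow_add hx0, ← rpow_mul hx0.le, ← rpow_mul hx0.le, mul_comm a, mul_comm b]
    _ ≤ w₁ * x ^ a + w₂ * x ^ b :=
      geom_mean_le_arith_mean2_weighted hw₁ hw₂ (by positivity) (by positivity) hw

section RpowMix

variable {x κ : ℝ}

theorem le_rpow_mix_of_le_two (hx0 : 0 < x) (hx1 : x ≤ 1) (hκ1 : 1 ≤ κ) (hκ2 : κ ≤ 2) :
    x ≤ 2 / 3 * x ^ (1 / κ) + 1 / 3 * x ^ κ := by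
  refine self_le_weighted_rpow_add_rpow hx0 hx1 (by norm_num) (by norm_num) (by norm_num) ?_
  have hκ0 : 0 < κ := by linarith
  have hexp : 2 / 3 * (1 / κ) + 1 / 3 * κ = 1 + (κ - 1) * (κ - 2) / (3 * κ) := by
    field_simp
    ring
  have hneg : (κ - 1) * (κ - 2) / (3 * κ) ≤ 0 :=
    div_nonpos_of_nonpos_of_nonneg (mul_nonpos_of_nonneg_of_nonpos (by linarith) (by linarith))
      (by positivity)
  linarith

theorem le_two_thirds_mul_rpow_one_div_of_three_le (hx0 : 0 < x) (hx : x ≤ 1 / 2)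
    (hκ : 3 ≤ κ) : x ≤ 2 / 3 * x ^ (1 / κ) := by
  have hcube : (x ^ (1 / 3 : ℝ)) ^ 3 = x := by
    rw [← rpow_natCast, ← rpow_mul hx0.le]
    norm_num
  have hroot : 0 < x ^ (1 / 3 : ℝ) := rpow_pos_of_pos hx0 _
  calc x ≤ 2 / 3 * x ^ (1 / 3 : ℝ) := by
        nlinarith [sq_nonneg ((x ^ (1 / 3 : ℝ)) ^ 2 - 2 / 3), pow_pos hroot 3]
    _ ≤ 2 / 3 * x ^ (1 / κ) := by
      have hexp : 1 / κ ≤ 1 / 3 := by gcongr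
      exact mul_le_mul_of_nonneg_left (rpow_le_rpow_of_exponent_ge hx0 (by linarith) hexp)
        (by norm_num)

theorem le_rpow_mix_of_two_le_of_le_three (hx0 : 0 < x) (hx : x ≤ 1 / 2) (hκ2 : 2 ≤ κ)
    (hκ3 : κ ≤ 3) : x ≤ 2 / 3 * x ^ (1 / κ) + 1 / 3 * x ^ κ := by
  have hpoly : x ≤ 2 / 3 * √x + 1 / 3 * x ^ 3 := by
    obtain ⟨s, hs0, rfl⟩ : ∃ s, 0 ≤ s ∧ s ^ 2 = x := ⟨√x, sqrt_nonneg x, sq_sqrt hx0.le⟩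
    rw [sqrt_sq hs0]
    nlinarith [mul_nonneg hs0 (sq_nonneg (s - 2 / 3)), pow_nonneg hs0 3]
  have hroot : x ^ (1 / 2 : ℝ) ≤ x ^ (1 / κ) :=
    rpow_le_rpow_of_exponent_ge hx0 (by linarith) (by gcongr)
  have hpow : x ^ (3 : ℝ) ≤ x ^ κ := rpow_le_rpow_of_exponent_ge hx0 (by linarith) hκ3
  rw [sqrt_eq_rpow, ← rpow_natCast] at hpoly
  push_cast at hpoly
  linarith

theorem le_rpow_mix_of_le_half (hx0 : 0 < x) (hx : x ≤ 1 / 2) (hκ : 1 ≤ κ) :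
    x ≤ 2 / 3 * x ^ (1 / κ) + 1 / 3 * x ^ κ := by
  rcases le_total κ 2 with hκ2 | hκ2
  · exact le_rpow_mix_of_le_two hx0 (by linarith) hκ hκ2
  rcases le_total κ 3 with hκ3 | hκ3
  · exact le_rpow_mix_of_two_le_of_le_three hx0 hx hκ2 hκ3
  · have hfirst := le_two_thirds_mul_rpow_one_div_of_three_le hx0 hx hκ3
    have hsecond : 0 ≤ x ^ κ := rpow_nonneg hx0.le κ
    linarith

end RpowMix

/-- For every integer n ≥ 2 and real κ ≥ 1,
    1/n ≤ (2/3)·(1/n)^(1/κ) + (1/3)·(1/n)^κ. -/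
theorem stmt2 (n : ℕ) (hn : 2 ≤ n) (κ : ℝ) (hκ : 1 ≤ κ) :
    (1 / n : ℝ) ≤ (2 / 3) * (1 / n : ℝ) ^ (1 / κ) + (1 / 3) * (1 / n : ℝ) ^ κ := by
  have hn' : (2 : ℝ) ≤ n := by exact_mod_cast hn
  exact le_rpow_mix_of_le_half (by positivity) (by gcongr) hκ
end

section
/- The function h(κ) = ln 2 - 2·ln κ + (ln 2)·(κ - 1/κ) is nonnegative for all real κ ≥ 1. -/
/-!
Write κ = s² with s ≥ 1. The inequality t ≤ sinh t at t = log s gives log κ ≤ s - 1/s, and after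
multiplying by s² what remains is a quartic inequality in s, which holds as soon as log 2 ≥ 0.69.
-/

open Real

theorem log_le_half_sub_inv {x : ℝ} (hx : 1 ≤ x) : log x ≤ (x - x⁻¹) / 2 :=
  sinh_log (by linarith) ▸ self_le_sinh_iff.2 (log_nonneg hx)

theorem log_sq_le_sub_inv {s : ℝ} (hs : 1 ≤ s) : log (s ^ 2) ≤ s - s⁻¹ := by
  rw [log_pow]
  push_cast
  linarith [log_le_half_sub_inv hs]

theorem two_mul_sub_inv_le_log_two_mul {s : ℝ} (hs : 1 ≤ s) :
    2 * (s - s⁻¹) ≤ log 2 * (1 + s ^ 2 - (s ^ 2)⁻¹) := by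
  have hs0 : 0 < s := by linarith
  have hc : (0.69 : ℝ) ≤ log 2 := by linarith [log_two_gt_d9]
  have hquartic : 0 ≤ log 2 * (s ^ 4 + s ^ 2 - 1) - 2 * (s ^ 3 - s) := by
    nlinarith [mul_nonneg (sub_nonneg.2 hs) (sq_nonneg (s - 1)), pow_pos hs0 4,
      sq_nonneg (s ^ 2 - 2 * s)]
  have hcleared : log 2 * (1 + s ^ 2 - (s ^ 2)⁻¹) - 2 * (s - s⁻¹) =
      (log 2 * (s ^ 4 + s ^ 2 - 1) - 2 * (s ^ 3 - s)) / s ^ 2 := by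
    field_simp
    ring
  linarith [hcleared ▸ div_nonneg hquartic (sq_nonneg s)]

/-- h(κ) = ln 2 - 2 ln κ + (ln 2)(κ - 1/κ) is nonnegative for all κ ≥ 1. -/
theorem stmt4 (κ : ℝ) (hκ : 1 ≤ κ) :
    0 ≤ Real.log 2 - 2 * Real.log κ + Real.log 2 * (κ - 1 / κ) := by
  obtain ⟨s, hs, rfl⟩ : ∃ s, 1 ≤ s ∧ κ = s ^ 2 :=
    ⟨√κ, one_le_sqrt.2 hκ, (sq_sqrt (by linarith)).symm⟩
  rw [one_div]
  linarith [log_sq_le_sub_inv hs, two_mul_sub_inv_le_log_two_mul hs]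
end

section
/- For n ≥ 2 and κ > 1, the maximum over (x̂, ŷ) in S_P^κ of the minimum over (x, y) in S^κ of the ℓ¹-distance ‖x - x̂‖₁ + ‖y - ŷ‖₁ is at most 1 - n^(1-κ). -/
/-! Keep `x̂` and move `ŷ` down to `x̂ ^ κ`: the cost is `∑ (ŷⱼ - x̂ⱼ ^ κ) ≤ 1 - ∑ x̂ⱼ ^ κ`, and the
power mean inequality bounds `∑ x̂ⱼ ^ κ` below by its value `n ^ (1 - κ)` at the barycenter. -/

open Finset

lemma card_rpow_one_sub_le_sum_rpow_of_mem_stdSimplex {ι : Type*} [Fintype ι] {x : ι → ℝ}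
    (hx : x ∈ stdSimplex ℝ ι) {p : ℝ} (hp : 1 ≤ p) :
    (Fintype.card ι : ℝ) ^ (1 - p) ≤ ∑ i, x i ^ p := by
  obtain ⟨hx_nonneg, hx_sum⟩ := hx
  have hcard : (0 : ℝ) < Fintype.card ι := by
    have : Nonempty ι := by
      by_contra h
      rw [not_nonempty_iff] at h
      simp at hx_sum
    exact_mod_cast Fintype.card_pos
  have hmean := Real.rpow_sum_le_const_mul_sum_rpow_of_nonneg (s := univ) hp
    fun i _ => hx_nonneg i
  rw [hx_sum, Real.one_rpow, card_univ] at hmean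
  calc (Fintype.card ι : ℝ) ^ (1 - p)
      ≤ (Fintype.card ι : ℝ) ^ (1 - p) * ((Fintype.card ι : ℝ) ^ (p - 1) * ∑ i, x i ^ p) :=
        le_mul_of_one_le_right (by positivity) hmean
    _ = ∑ i, x i ^ p := by
        rw [← mul_assoc, ← Real.rpow_add hcard, sub_add_sub_cancel', sub_self, Real.rpow_zero,
          one_mul]

theorem stmt7_general (n : ℕ) (κ : ℝ) (hκ : 1 < κ)
    (xh yh : Fin n → ℝ) (hxh : xh ∈ stdSimplex ℝ (Fin n))
    (hP : ∀ j, xh j ^ κ ≤ yh j ∧ yh j ≤ xh j) :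
    ∃ x ∈ stdSimplex ℝ (Fin n), ∃ y : Fin n → ℝ, (∀ j, y j = x j ^ κ) ∧
      ∑ j, |x j - xh j| + ∑ j, |y j - yh j| ≤ 1 - (n : ℝ) ^ (1 - κ) := by
  refine ⟨xh, hxh, fun j => xh j ^ κ, fun j => rfl, ?_⟩
  have hpower_mean := card_rpow_one_sub_le_sum_rpow_of_mem_stdSimplex hxh hκ.le
  rw [Fintype.card_fin] at hpower_mean
  calc ∑ j, |xh j - xh j| + ∑ j, |xh j ^ κ - yh j|
      = ∑ j, (yh j - xh j ^ κ) := by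
        simp only [sub_self, abs_zero, sum_const_zero, zero_add]
        exact sum_congr rfl fun j _ => by rw [abs_sub_comm, abs_of_nonneg (by linarith [hP j])]
    _ ≤ ∑ j, (xh j - xh j ^ κ) := sum_le_sum fun j _ => by linarith [hP j]
    _ = 1 - ∑ j, xh j ^ κ := by rw [sum_sub_distrib, hxh.2]
    _ ≤ 1 - (n : ℝ) ^ (1 - κ) := by linarith

/-- For n ≥ 2 and κ > 1, every point of the power cone relaxation S_P^κ over
    the standard simplex is within ℓ¹-distance 1 - n^(1-κ) of the nonconvex
    set S^κ, i.e. max_{(xh,yh)∈S_P^κ} min_{(x,y)∈S^κ} ‖x-xh‖₁+‖y-yh‖₁ ≤ 1 - n^(1-κ). -/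
theorem stmt7 (n : ℕ) (hn : 2 ≤ n) (κ : ℝ) (hκ : 1 < κ)
    (xh yh : Fin n → ℝ) (hxh : xh ∈ stdSimplex ℝ (Fin n))
    (hP : ∀ j, xh j ^ κ ≤ yh j ∧ yh j ≤ xh j) :
    ∃ x ∈ stdSimplex ℝ (Fin n), ∃ y : Fin n → ℝ, (∀ j, y j = x j ^ κ) ∧
      ∑ j, |x j - xh j| + ∑ j, |y j - yh j| ≤ 1 - (n : ℝ) ^ (1 - κ) :=
  stmt7_general n κ hκ xh yh hxh hP
end

section
/- Let n ≥ 2 and κ > 1, and let x̂ⱼ = ŷⱼ = 1/n for all j. Then for every x in the standard simplex Δⁿ, Σⱼ |xⱼ - 1/n| + Σⱼ |xⱼ^κ - 1/n| ≥ 1 - n^(1-κ). -/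
/-!
Put `a = 1/n`. By monotonicity below `a`, and by convexity of `t ↦ t ^ κ` (the chord from `a` to `1`
has slope at most `1/(1 - a) ≤ 2`) above it, every `t ∈ [0, 1]` satisfies
`t ^ κ ≤ a ^ κ + (t - a) + |t - a|`. Summing over the coordinates of a point of the simplex, where the
terms `xⱼ - a` cancel, gives `∑ⱼ xⱼ ^ κ ≤ n a ^ κ + ∑ⱼ |xⱼ - a|`, and `n a ^ κ = n ^ (1 - κ)`. Finally
`∑ⱼ |xⱼ ^ κ - a| ≥ ∑ⱼ (a - xⱼ ^ κ) = 1 - ∑ⱼ xⱼ ^ κ`.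
-/

open Finset

namespace Real

variable {κ a t : ℝ}

theorem one_sub_mul_rpow_sub_rpow_le (hκ : 1 ≤ κ) (ha : 0 ≤ a) (hat : a ≤ t) (ht : t ≤ 1) :
    (1 - a) * (t ^ κ - a ^ κ) ≤ t - a := by
  have haκ : 0 ≤ a ^ κ := rpow_nonneg ha κ
  rcases hat.eq_or_lt with rfl | hat
  · simp
  rcases ht.eq_or_lt with rfl | ht
  · rw [one_rpow]
    nlinarith
  have chord := (convexOn_rpow hκ).secant_mono_aux1 ha (Set.mem_Ici.2 zero_le_one) hat ht
  rw [one_rpow] at chord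
  nlinarith [mul_nonneg (sub_nonneg.2 hat.le) haκ]

theorem rpow_le_rpow_add_sub_add_abs_sub (hκ : 1 ≤ κ) (ha : 0 ≤ a) (ha2 : a ≤ 1 / 2)
    (ht0 : 0 ≤ t) (ht1 : t ≤ 1) : t ^ κ ≤ a ^ κ + (t - a) + |t - a| := by
  rcases le_total t a with hta | hat
  · have := rpow_le_rpow ht0 hta (zero_le_one.trans hκ)
    rw [abs_of_nonpos (sub_nonpos.2 hta)]
    linarith
  · have := one_sub_mul_rpow_sub_rpow_le hκ ha hat ht1
    rw [abs_of_nonneg (sub_nonneg.2 hat)]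
    nlinarith

end Real

theorem sum_rpow_le_of_mem_stdSimplex {ι : Type*} [Fintype ι] (hι : 2 ≤ Fintype.card ι)
    {κ : ℝ} (hκ : 1 ≤ κ) {x : ι → ℝ} (hx : x ∈ stdSimplex ℝ ι) :
    ∑ j, x j ^ κ ≤ Fintype.card ι * (1 / Fintype.card ι : ℝ) ^ κ +
      ∑ j, |x j - 1 / Fintype.card ι| := by
  obtain ⟨hx0, hx1⟩ := hx
  set a : ℝ := 1 / Fintype.card ι
  have hcard : (2 : ℝ) ≤ Fintype.card ι := by exact_mod_cast hι
  have ha2 : a ≤ 1 / 2 := one_div_le_one_div_of_le two_pos hcard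
  have hxj_le_one (j : ι) : x j ≤ 1 :=
    hx1 ▸ single_le_sum (fun i _ ↦ hx0 i) (mem_univ j)
  have hcancel : ∑ j, (x j - a) = 0 := by
    rw [sum_sub_distrib, hx1, sum_const, card_univ, nsmul_eq_mul,
      mul_one_div_cancel (by positivity), sub_self]
  calc ∑ j, x j ^ κ ≤ ∑ j, (a ^ κ + (x j - a) + |x j - a|) :=
        sum_le_sum fun j _ ↦ Real.rpow_le_rpow_add_sub_add_abs_sub hκ (by positivity) ha2
          (hx0 j) (hxj_le_one j)
    _ = Fintype.card ι * a ^ κ + ∑ j, |x j - a| := by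
        rw [sum_add_distrib, sum_add_distrib, hcancel, sum_const, card_univ, nsmul_eq_mul,
          add_zero]

/-- For n ≥ 2, κ > 1 and x̂ⱼ = ŷⱼ = 1/n: for every x in the standard simplex,
    ∑ⱼ |xⱼ - 1/n| + ∑ⱼ |xⱼ^κ - 1/n| ≥ 1 - n^(1-κ). -/
theorem stmt8 (n : ℕ) (hn : 2 ≤ n) (κ : ℝ) (hκ : 1 < κ)
    (x : Fin n → ℝ) (hx : x ∈ stdSimplex ℝ (Fin n)) :
    1 - (n : ℝ) ^ (1 - κ) ≤ ∑ j, |x j - 1 / n| + ∑ j, |x j ^ κ - 1 / n| := by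
  have hn0 : (0 : ℝ) < n := by positivity
  have hpow := sum_rpow_le_of_mem_stdSimplex (by simpa using hn) hκ.le hx
  rw [Fintype.card_fin] at hpow
  have hscale : (n : ℝ) * (1 / n : ℝ) ^ κ = (n : ℝ) ^ (1 - κ) := by
    rw [Real.div_rpow zero_le_one hn0.le, Real.one_rpow, Real.rpow_sub hn0, Real.rpow_one]
    ring
  have hdefect : 1 - ∑ j, x j ^ κ ≤ ∑ j, |x j ^ κ - 1 / n| := by
    calc 1 - ∑ j, x j ^ κ = ∑ j : Fin n, (1 / n - x j ^ κ) := by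
          rw [sum_sub_distrib, sum_const, card_univ, Fintype.card_fin, nsmul_eq_mul]
          field_simp
      _ ≤ ∑ j, |x j ^ κ - 1 / n| := sum_le_sum fun j _ ↦ neg_sub (x j ^ κ) _ ▸ neg_le_abs _
  linarith
end

section
/- Let G = Δ² be the standard simplex in ℝ² and κ = 2. Then the convex hull of S² = {(x,y) ∈ Δ² × ℝ² : y₁ = x₁², y₂ = x₂²} equals the set {(x,y) ∈ Δ² × ℝ² : xⱼ² ≤ yⱼ ≤ xⱼ for j = 1,2, and x₁ - y₁ = x₂ - y₂}. -/
/-!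
The affine map `(t, u) ↦ ((t, 1 - t), (u, 1 - 2t + u))` carries the parabola arc
`{(t, t²) : 0 ≤ t ≤ 1}` onto `S²` and the region `t² ≤ u ≤ t` between the arc and its chord onto
the candidate set. Affine maps commute with convex hulls, so it suffices to see that this region
is the convex hull of the arc: it is convex, and each of its points `(t, u)` lies on the vertical
segment from the arc point `(t, t²)` to the chord point `(t, t)`, itself a convex combination of
the endpoints `(0, 0)` and `(1, 1)` of the arc.
-/

open Set

def parabolaArc : Set (ℝ × ℝ) := {p | p.1 ∈ Icc 0 1 ∧ p.2 = p.1 ^ 2}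

def parabolaChordRegion : Set (ℝ × ℝ) := {p | p.1 ^ 2 ≤ p.2 ∧ p.2 ≤ p.1}

theorem convex_parabolaChordRegion : Convex ℝ parabolaChordRegion := by
  have epigraph : Convex ℝ {p : ℝ × ℝ | p.1 ^ 2 ≤ p.2} := by
    simpa using (even_two.convexOn_pow (𝕜 := ℝ)).convex_epigraph
  have halfPlane : Convex ℝ {p : ℝ × ℝ | p.2 ≤ p.1} := by
    simpa [sub_nonpos] using
      convex_halfSpace_le (LinearMap.snd ℝ ℝ ℝ - LinearMap.fst ℝ ℝ ℝ).isLinear 0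
  exact epigraph.inter halfPlane

theorem convexHull_parabolaArc : convexHull ℝ parabolaArc = parabolaChordRegion := by
  refine (convexHull_min ?_ convex_parabolaChordRegion).antisymm ?_
  · rintro p ⟨⟨ht₀, ht₁⟩, hu⟩
    exact ⟨hu.ge, by rw [hu]; nlinarith⟩
  · rintro ⟨t, u⟩ ⟨hlow, hup⟩
    have ht : t ∈ Icc (0 : ℝ) 1 := ⟨by nlinarith, by nlinarith⟩
    have onChord : (t, t) ∈ convexHull ℝ parabolaArc := by
      refine segment_subset_convexHull (x := (0, 0)) (y := (1, 1)) (by simp [parabolaArc])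
        (by simp [parabolaArc]) ?_
      exact ⟨1 - t, t, by linarith [ht.2], ht.1, by ring, by ext <;> simp⟩
    have onArc : (t, t ^ 2) ∈ convexHull ℝ parabolaArc := subset_convexHull ℝ _ ⟨ht, rfl⟩
    refine (convex_convexHull ℝ _).segment_subset onArc onChord ?_
    rw [← Prod.image_mk_segment_right, segment_eq_Icc (hlow.trans hup)]
    exact ⟨u, ⟨hlow, hup⟩, rfl⟩

def simplexChart : ℝ × ℝ →ᵃ[ℝ] (Fin 2 → ℝ) × (Fin 2 → ℝ) where
  toFun p := (![p.1, 1 - p.1], ![p.2, 1 - 2 * p.1 + p.2])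
  linear :=
    { toFun := fun p => (![p.1, -p.1], ![p.2, p.2 - 2 * p.1])
      map_add' := fun p q => by ext i <;> fin_cases i <;> (simp; try ring)
      map_smul' := fun c p => by ext i <;> fin_cases i <;> (simp; try ring) }
  map_vadd' p v := by ext i <;> fin_cases i <;> (simp; try ring)

@[simp]
theorem simplexChart_apply (p : ℝ × ℝ) :
    simplexChart p = (![p.1, 1 - p.1], ![p.2, 1 - 2 * p.1 + p.2]) := rfl

theorem mem_stdSimplex_fin_two_iff {𝕜 : Type*} [Ring 𝕜] [PartialOrder 𝕜] [IsOrderedRing 𝕜]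
    (x : Fin 2 → 𝕜) : x ∈ stdSimplex 𝕜 (Fin 2) ↔ 0 ≤ x 0 ∧ 0 ≤ x 1 ∧ x 0 + x 1 = 1 := by
  simp [stdSimplex, Fin.forall_fin_two, Fin.sum_univ_two, and_assoc]

theorem simplexChart_apply_eval_zero {x y : Fin 2 → ℝ} (hx : x 0 + x 1 = 1)
    (hxy : x 0 - y 0 = x 1 - y 1) : simplexChart (x 0, y 0) = (x, y) := by
  ext i <;> fin_cases i <;> simp <;> linarith

theorem simplexChart_image_parabolaArc :
    simplexChart '' parabolaArc
      = {p | p.1 ∈ stdSimplex ℝ (Fin 2) ∧ ∀ j, p.2 j = p.1 j ^ 2} := by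
  ext ⟨x, y⟩
  simp only [mem_image, mem_ofPred_eq, mem_stdSimplex_fin_two_iff, Fin.forall_fin_two]
  constructor
  · rintro ⟨⟨t, u⟩, ⟨⟨ht₀, ht₁⟩, hu⟩, hp⟩
    dsimp only at ht₀ ht₁ hu
    subst hu
    simp only [simplexChart_apply, Prod.mk.injEq] at hp
    obtain ⟨rfl, rfl⟩ := hp
    simp only [Matrix.cons_val_zero, Matrix.cons_val_one]
    exact ⟨⟨ht₀, by linarith, by ring⟩, trivial, by ring⟩
  · rintro ⟨⟨hx₀, hx₁, hx⟩, hy₀, hy₁⟩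
    refine ⟨(x 0, y 0), ⟨⟨hx₀, by linarith⟩, hy₀⟩, simplexChart_apply_eval_zero hx ?_⟩
    rw [hy₀, hy₁]
    linear_combination (x 1 - x 0) * hx

theorem simplexChart_image_parabolaChordRegion :
    simplexChart '' parabolaChordRegion
      = {p | p.1 ∈ stdSimplex ℝ (Fin 2) ∧ (∀ j, p.1 j ^ 2 ≤ p.2 j ∧ p.2 j ≤ p.1 j) ∧
          p.1 0 - p.2 0 = p.1 1 - p.2 1} := by
  ext ⟨x, y⟩
  simp only [mem_image, mem_ofPred_eq, mem_stdSimplex_fin_two_iff, Fin.forall_fin_two]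
  constructor
  · rintro ⟨⟨t, u⟩, ⟨hlow, hup⟩, hp⟩
    dsimp only at hlow hup
    simp only [simplexChart_apply, Prod.mk.injEq] at hp
    obtain ⟨rfl, rfl⟩ := hp
    simp only [Matrix.cons_val_zero, Matrix.cons_val_one]
    exact ⟨⟨by nlinarith, by nlinarith, by ring⟩, ⟨⟨hlow, hup⟩, by nlinarith, by linarith⟩, by ring⟩
  · rintro ⟨⟨-, -, hx⟩, ⟨⟨hlow, hup⟩, -⟩, hxy⟩
    exact ⟨(x 0, y 0), ⟨hlow, hup⟩, simplexChart_apply_eval_zero hx hxy⟩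

/-- For n = 2 and κ = 2, the convex hull of
    S² = {(x,y) ∈ Δ² × ℝ² : yⱼ = xⱼ²} equals
    {(x,y) ∈ Δ² × ℝ² : xⱼ² ≤ yⱼ ≤ xⱼ, x₁ - y₁ = x₂ - y₂}. -/
theorem stmt9 :
    convexHull ℝ
      {p : (Fin 2 → ℝ) × (Fin 2 → ℝ) |
        p.1 ∈ stdSimplex ℝ (Fin 2) ∧ ∀ j, p.2 j = p.1 j ^ 2}
    = {p : (Fin 2 → ℝ) × (Fin 2 → ℝ) |
        p.1 ∈ stdSimplex ℝ (Fin 2) ∧ (∀ j, p.1 j ^ 2 ≤ p.2 j ∧ p.2 j ≤ p.1 j) ∧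
        p.1 0 - p.2 0 = p.1 1 - p.2 1} := by
  rw [← simplexChart_image_parabolaArc, ← AffineMap.image_convexHull, convexHull_parabolaArc,
    simplexChart_image_parabolaChordRegion]
end

section
/- Let κ = 2 and Δ³ the standard simplex in ℝ³. Then the set {(x,y) ∈ Δ³ × ℝ³ : xⱼ² ≤ yⱼ ≤ xⱼ and there exists a symmetric 3×3 matrix X ≥ 0 with Xe = x and diag(X) = y} equals {(x,y) ∈ Δ³ × ℝ³ : xⱼ² ≤ yⱼ ≤ xⱼ for all j, and (xⱼ - yⱼ) ≤ Σ_{i≠j}(xᵢ - yᵢ) for each j = 1,2,3}. -/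
/-!
Write `s = x - y` for the off-diagonal row sums of `X`. Necessity holds in any dimension: by symmetry
`s j = ∑_{i ≠ j} X i j`, and each `X i j` with `i ≠ j` is one of the nonnegative summands of `s i`.
For three indices the condition is also sufficient: the off-diagonal entry `X i j` must equal
`s i + s j - (s 0 + s 1 + s 2) / 2`, which is nonnegative exactly when `s k ≤ s i + s j` for the
third index `k`.
-/

open Finset

theorem Matrix.IsSymm.rowSum_sub_diag_le_sum_erase {ι R : Type*} [Fintype ι] [DecidableEq ι]
    [AddCommGroup R] [PartialOrder R] [IsOrderedAddMonoid R] {X : Matrix ι ι R} (hX : X.IsSymm)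
    (hnn : ∀ i j, 0 ≤ X i j) (j : ι) :
    ∑ k, X j k - X j j ≤ ∑ i ∈ univ.erase j, (∑ k, X i k - X i i) := by
  rw [← sum_erase_eq_sub (mem_univ j)]
  refine sum_le_sum fun i hi => ?_
  rw [hX.apply i j, ← sum_erase_eq_sub (mem_univ i)]
  exact single_le_sum (fun k _ => hnn i k) (mem_erase.2 ⟨(ne_of_mem_erase hi).symm, mem_univ j⟩)

theorem exists_isSymm_nonneg_rowSum_diag_fin_three {R : Type*} [Field R] [LinearOrder R]
    [IsStrictOrderedRing R] {x y : Fin 3 → R} (hy : ∀ j, 0 ≤ y j)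
    (h : ∀ j, x j - y j ≤ ∑ i ∈ univ.erase j, (x i - y i)) :
    ∃ X : Matrix (Fin 3) (Fin 3) R, X.IsSymm ∧ (∀ i j, 0 ≤ X i j) ∧
      (∀ i, ∑ j, X i j = x i) ∧ (∀ j, X j j = y j) := by
  set s : Fin 3 → R := x - y
  have h : ∀ j, 2 * s j ≤ s 0 + s 1 + s 2 := fun j => by
    have := h j
    rw [sum_erase_eq_sub (mem_univ j), Fin.sum_univ_three] at this
    simp only [s, Pi.sub_apply]
    linarith
  refine ⟨Matrix.of fun i j => if i = j then y i else s i + s j - (s 0 + s 1 + s 2) / 2,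
    ?_, ?_, ?_, ?_⟩
  · ext i j
    simp only [Matrix.transpose_apply, Matrix.of_apply, eq_comm (a := j)]
    split_ifs with hij
    · rw [hij]
    · ring
  · intro i j
    fin_cases i <;> fin_cases j <;> simp <;> linarith [hy 0, hy 1, hy 2, h 0, h 1, h 2]
  · intro i
    fin_cases i <;> simp [Fin.sum_univ_three, s] <;> ring
  · intro j
    simp

/-- For n = 3 and κ = 2: the RLT-lifted relaxation
    {(x,y) ∈ Δ³ × ℝ³ : xⱼ² ≤ yⱼ ≤ xⱼ, ∃ X symmetric entrywise nonnegative
     with Xe = x and diag X = y}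
    equals
    {(x,y) ∈ Δ³ × ℝ³ : xⱼ² ≤ yⱼ ≤ xⱼ, (xⱼ - yⱼ) ≤ ∑_{i≠j} (xᵢ - yᵢ) ∀ j}. -/
theorem stmt11 :
    {p : (Fin 3 → ℝ) × (Fin 3 → ℝ) |
      p.1 ∈ stdSimplex ℝ (Fin 3) ∧ (∀ j, p.1 j ^ 2 ≤ p.2 j ∧ p.2 j ≤ p.1 j) ∧
      ∃ X : Matrix (Fin 3) (Fin 3) ℝ, X.IsSymm ∧ (∀ i j, 0 ≤ X i j) ∧
        (∀ i, ∑ j, X i j = p.1 i) ∧ (∀ j, X j j = p.2 j)}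
    = {p : (Fin 3 → ℝ) × (Fin 3 → ℝ) |
        p.1 ∈ stdSimplex ℝ (Fin 3) ∧ (∀ j, p.1 j ^ 2 ≤ p.2 j ∧ p.2 j ≤ p.1 j) ∧
        ∀ j, p.1 j - p.2 j ≤ ∑ i ∈ Finset.univ.erase j, (p.1 i - p.2 i)} := by
  ext ⟨x, y⟩
  simp only [Set.mem_ofPred_eq]
  refine and_congr_right fun _ => and_congr_right fun hb => ⟨?_, ?_⟩
  · rintro ⟨X, hX, hnn, hrow, hdiag⟩ j
    simpa only [hrow, hdiag] using hX.rowSum_sub_diag_le_sum_erase hnn j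
  · exact exists_isSymm_nonneg_rowSum_diag_fin_three fun j => (sq_nonneg (x j)).trans (hb j).1
end

section
/- Let x̂ = (1/3,1/3,1/3), ŷ = (1/9,1/9,1/3). The unique symmetric entrywise-nonnegative 3×3 matrix X with Xe = x̂ and diag(X) = ŷ has X₁₂ = 2/9, X₁₃ = X₂₃ = 0, and this X violates X₁₁X₂₂ ≥ X₁₂², i.e., X is not positive semidefinite and fails the 2×2 minor condition. -/
/-!
Symmetry turns the three row-sum conditions into the linear system
`X₀₁ + X₀₂ = 2/9`, `X₀₁ + X₁₂ = 2/9`, `X₀₂ + X₁₂ = 0` for the off-diagonal entries, whose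
unique solution is `X₀₁ = 2/9`, `X₀₂ = X₁₂ = 0`. Then `X₀₁² = 4/81 > 1/81 = X₀₀X₁₁`, while a
positive semidefinite matrix has nonnegative principal `2 × 2` minors.
-/

theorem Matrix.PosSemidef.sq_apply_le_mul_diag {n : Type*} {X : Matrix n n ℝ}
    (hX : X.PosSemidef) (i j : n) : X i j ^ 2 ≤ X i i * X j j := by
  have hdet := (hX.submatrix ![i, j]).det_nonneg
  have hsymm : X j i = X i j := by
    simpa using congrFun (congrFun hX.isHermitian i) j
  rw [Matrix.det_fin_two] at hdet
  simp only [Matrix.submatrix_apply, Matrix.cons_val_zero, Matrix.cons_val_one] at hdet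
  rw [hsymm, ← sq] at hdet
  linarith

theorem Matrix.IsSymm.sum_rows_fin_three {R : Type*} [AddCommMonoid R]
    {X : Matrix (Fin 3) (Fin 3) R} (hX : X.IsSymm) :
    ∑ j, X 0 j = X 0 0 + X 0 1 + X 0 2 ∧
      ∑ j, X 1 j = X 0 1 + X 1 1 + X 1 2 ∧
      ∑ j, X 2 j = X 0 2 + X 1 2 + X 2 2 := by
  simp only [Fin.sum_univ_three, hX.apply 0 1, hX.apply 0 2, hX.apply 1 2, and_self]

/-- For x̂ = (1/3,1/3,1/3), ŷ = (1/9,1/9,1/3): a symmetric entrywise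
    nonnegative 3×3 matrix with row sums x̂ and diagonal ŷ exists, is unique
    with X₀₁ = 2/9, X₀₂ = X₁₂ = 0, and any such matrix violates
    X₀₀X₁₁ ≥ X₀₁² and is not positive semidefinite. -/
theorem stmt13 :
    (∃ X : Matrix (Fin 3) (Fin 3) ℝ, X.IsSymm ∧ (∀ i j, 0 ≤ X i j) ∧
      (∀ i, ∑ j, X i j = (![(1 : ℝ) / 3, 1 / 3, 1 / 3]) i) ∧
      (∀ j, X j j = (![(1 : ℝ) / 9, 1 / 9, 1 / 3]) j)) ∧
    ∀ X : Matrix (Fin 3) (Fin 3) ℝ, X.IsSymm → (∀ i j, 0 ≤ X i j) →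
      (∀ i, ∑ j, X i j = (![(1 : ℝ) / 3, 1 / 3, 1 / 3]) i) →
      (∀ j, X j j = (![(1 : ℝ) / 9, 1 / 9, 1 / 3]) j) →
      X 0 1 = 2 / 9 ∧ X 0 2 = 0 ∧ X 1 2 = 0 ∧
      ¬ (X 0 1 ^ 2 ≤ X 0 0 * X 1 1) ∧ ¬ X.PosSemidef := by
  refine ⟨⟨!![1/9, 2/9, 0; 2/9, 1/9, 0; 0, 0, 1/3], ?_, ?_, ?_, ?_⟩, ?_⟩
  · ext i j
    fin_cases i <;> fin_cases j <;> rfl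
  · intro i j
    fin_cases i <;> fin_cases j <;> norm_num
  · intro i
    fin_cases i <;> simp [Fin.sum_univ_three] <;> norm_num
  · intro j
    fin_cases j <;> rfl
  intro X hX _ hrow hdiag
  obtain ⟨hrow₀, hrow₁, hrow₂⟩ := hX.sum_rows_fin_three
  have h₀ := hrow 0; have h₁ := hrow 1; have h₂ := hrow 2
  have d₀ := hdiag 0; have d₁ := hdiag 1; have d₂ := hdiag 2
  simp only [Matrix.cons_val] at h₀ h₁ h₂ d₀ d₁ d₂
  have hX₀₁ : X 0 1 = 2 / 9 := by linarith
  have hminor : ¬ (X 0 1 ^ 2 ≤ X 0 0 * X 1 1) := by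
    rw [hX₀₁, d₀, d₁]
    norm_num
  exact ⟨hX₀₁, by linarith, by linarith, hminor,
    fun hpsd => hminor (hpsd.sq_apply_le_mul_diag 0 1)⟩
end

section
/- Let (x̂, ŷ) ∈ Δⁿ × ℝⁿ satisfy x̂ⱼ^κ ≤ ŷⱼ ≤ x̂ⱼ for each j, with ŷⱼ ∈ {x̂ⱼ, x̂ⱼ^κ} for each j, and κ > 1. Then the matrix X̂ = x̂x̂ᵀ + D, where D is diagonal with Dⱼⱼ = 0 if ŷⱼ = x̂ⱼ^κ, Dⱼⱼ = ŷⱼ − x̂ⱼ² if ŷⱼ = x̂ⱼ and κ ≤ 2, and Dⱼⱼ = ŷⱼ^{2/κ} − x̂ⱼ² if ŷⱼ = x̂ⱼ and κ > 2, is entrywise nonnegative and positive semidefinite. -/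
/-!
`x̂ x̂ᵀ` is entrywise nonnegative and positive semidefinite, so it suffices that `D ≥ 0`.
Since `0 ≤ x̂ⱼ ≤ 1` and `x̂ⱼ^κ ≤ ŷⱼ`: for `κ ≤ 2`, `x̂ⱼ² ≤ x̂ⱼ^κ ≤ ŷⱼ`, and for `κ > 2`,
`x̂ⱼ² = (x̂ⱼ^κ)^(2/κ) ≤ ŷⱼ^(2/κ)`.
-/

open Matrix

namespace Real

theorem sq_le_rpow_of_le_two {x κ : ℝ} (hx₀ : 0 ≤ x) (hx₁ : x ≤ 1) (hκ : κ ≤ 2) :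
    x ^ 2 ≤ x ^ κ := by
  rw [← rpow_two]
  exact rpow_le_rpow_of_exponent_ge_of_imp hx₀ hx₁ hκ fun _ h ↦ absurd h two_ne_zero

theorem sq_le_rpow_two_div_of_rpow_le {x y κ : ℝ} (hx : 0 ≤ x) (hκ : 0 < κ) (h : x ^ κ ≤ y) :
    x ^ 2 ≤ y ^ (2 / κ) :=
  calc x ^ 2 = (x ^ κ) ^ (2 / κ) := by rw [← rpow_mul hx, mul_div_cancel₀ _ hκ.ne', rpow_two]
    _ ≤ y ^ (2 / κ) := rpow_le_rpow (rpow_nonneg hx κ) h (by positivity)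

end Real

theorem Matrix.vecMulVec_add_diagonal_nonneg {ι R : Type*} [DecidableEq ι] [Semiring R]
    [PartialOrder R] [IsOrderedRing R] {x d : ι → R} (hx : 0 ≤ x) (hd : 0 ≤ d) (i j : ι) :
    0 ≤ (vecMulVec x x + diagonal d) i j := by
  rw [add_apply, vecMulVec_apply, diagonal_apply]
  exact add_nonneg (mul_nonneg (hx i) (hx j)) (by split_ifs; exacts [hd i, le_rfl])

theorem stmt16_general (n : ℕ) (κ : ℝ)
    (xh yh : Fin n → ℝ) (hΔ : xh ∈ stdSimplex ℝ (Fin n))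
    (hP : ∀ j, xh j ^ κ ≤ yh j ∧ yh j ≤ xh j) :
    let d : Fin n → ℝ := fun j =>
      if yh j = xh j ^ κ then 0
      else if κ ≤ 2 then yh j - xh j ^ 2
      else yh j ^ (2 / κ) - xh j ^ 2
    let Xh : Matrix (Fin n) (Fin n) ℝ := Matrix.vecMulVec xh xh + Matrix.diagonal d
    (∀ i j, 0 ≤ Xh i j) ∧ Xh.PosSemidef := by
  intro d Xh
  have hd : ∀ j, 0 ≤ d j := by
    intro j
    obtain ⟨hx₀, hx₁⟩ := mem_Icc_of_mem_stdSimplex hΔ j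
    dsimp only [d]
    split_ifs with _ hκ
    · exact le_rfl
    · linarith [(hP j).1, Real.sq_le_rpow_of_le_two hx₀ hx₁ hκ]
    · exact sub_nonneg.2 <| Real.sq_le_rpow_two_div_of_rpow_le hx₀ (by linarith) (hP j).1
  refine ⟨vecMulVec_add_diagonal_nonneg hΔ.1 hd, ?_⟩
  simpa using (posSemidef_vecMulVec_self_star xh).add (posSemidef_diagonal_iff.2 hd)

/-- Given (xh,yh) in the power cone relaxation over the simplex with each
    yhⱼ ∈ {xhⱼ, xhⱼ^κ}, the matrix Xh = xhxhᵀ + D with the described diagonal D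
    is entrywise nonnegative and positive semidefinite. -/
theorem stmt16 (n : ℕ) (κ : ℝ) (hκ : 1 < κ)
    (xh yh : Fin n → ℝ) (hΔ : xh ∈ stdSimplex ℝ (Fin n))
    (hP : ∀ j, xh j ^ κ ≤ yh j ∧ yh j ≤ xh j)
    (hext : ∀ j, yh j = xh j ∨ yh j = xh j ^ κ) :
    let d : Fin n → ℝ := fun j =>
      if yh j = xh j ^ κ then 0
      else if κ ≤ 2 then yh j - xh j ^ 2
      else yh j ^ (2 / κ) - xh j ^ 2
    let Xh : Matrix (Fin n) (Fin n) ℝ := Matrix.vecMulVec xh xh + Matrix.diagonal d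
    (∀ i j, 0 ≤ Xh i j) ∧ Xh.PosSemidef :=
  stmt16_general n κ xh yh hΔ hP
end

section
/- Let κ > 1, Δⁿ the standard simplex, and suppose (x, y) ∈ Δⁿ × ℝⁿ with yⱼ = xⱼ^κ for all j. Define Xᵢⱼ = xᵢxⱼ and wᵢⱼ = Xᵢⱼ^κ / xⱼ^{κ−1} if xⱼ > 0, wᵢⱼ = 0 if xⱼ = 0. Then X and w are entrywise nonnegative, yᵢ = Σⱼ wᵢⱼ for every i, and wᵢⱼ^{1/κ} · xⱼ^{1−1/κ} ≥ Xᵢⱼ for all i,j (power cone membership). -/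
/-! On the simplex the lifted variable simplifies to `wᵢⱼ = xᵢ^κ xⱼ`: summing over `j` uses
`∑ⱼ xⱼ = 1`, and the power cone inequality holds with equality. -/

namespace Real

lemma mul_rpow_div_rpow_sub_one {a b : ℝ} (ha : 0 ≤ a) (hb : 0 < b) (κ : ℝ) :
    (a * b) ^ κ / b ^ (κ - 1) = a ^ κ * b := by
  rw [mul_rpow ha hb.le, mul_div_assoc, ← rpow_sub hb, sub_sub_cancel, rpow_one]

lemma rpow_mul_rpow_inv_mul_rpow_one_sub {a b κ : ℝ} (ha : 0 ≤ a) (hb : 0 ≤ b) (hκ : κ ≠ 0) :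
    (a ^ κ * b) ^ (1 / κ) * b ^ (1 - 1 / κ) = a * b := by
  rw [mul_rpow (rpow_nonneg ha κ) hb, ← rpow_mul ha, mul_one_div_cancel hκ, rpow_one,
    mul_assoc, ← rpow_add' hb (by simp), add_sub_cancel, rpow_one]

end Real

/-- Validity of the RPT constraints: for (x,y) ∈ S^κ over the simplex, the
    lifted variables Xᵢⱼ = xᵢxⱼ and wᵢⱼ = Xᵢⱼ^κ/xⱼ^{κ-1} (0 if xⱼ = 0) are
    nonnegative, satisfy yᵢ = ∑ⱼ wᵢⱼ, and the power cone memberships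
    wᵢⱼ^{1/κ} xⱼ^{1-1/κ} ≥ Xᵢⱼ. -/
theorem stmt19 (n : ℕ) (κ : ℝ) (hκ : 1 < κ) (x y : Fin n → ℝ)
    (hx : x ∈ stdSimplex ℝ (Fin n)) (hy : ∀ j, y j = x j ^ κ) :
    let X : Fin n → Fin n → ℝ := fun i j => x i * x j
    let w : Fin n → Fin n → ℝ := fun i j =>
      if x j = 0 then 0 else (X i j) ^ κ / (x j) ^ (κ - 1)
    (∀ i j, 0 ≤ X i j) ∧ (∀ i j, 0 ≤ w i j) ∧
    (∀ i, y i = ∑ j, w i j) ∧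
    (∀ i j, X i j ≤ (w i j) ^ (1 / κ) * (x j) ^ (1 - 1 / κ)) := by
  obtain ⟨hx_nonneg, hx_sum⟩ := hx
  intro X w
  have hw : ∀ i j, w i j = x i ^ κ * x j := by
    intro i j
    rcases (hx_nonneg j).eq_or_lt with hj | hj
    · simp [w, ← hj]
    · simp only [w, X, hj.ne', if_false, Real.mul_rpow_div_rpow_sub_one (hx_nonneg i) hj]
  refine ⟨fun i j => mul_nonneg (hx_nonneg i) (hx_nonneg j), fun i j => ?_, fun i => ?_,
    fun i j => ?_⟩
  · rw [hw]
    exact mul_nonneg (Real.rpow_nonneg (hx_nonneg i) κ) (hx_nonneg j)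
  · simp only [hw, ← Finset.mul_sum, hx_sum, mul_one, hy]
  · rw [hw, Real.rpow_mul_rpow_inv_mul_rpow_one_sub (hx_nonneg i) (hx_nonneg j)
      (by positivity)]
end
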